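/- arXiv:2411.00923 — 2 statements merged into one kernel-verified Lean document; each statement's English description precedes it below -/
import Mathlib

section
/- For every integer $k \ge 1$, the quantity $\mathcal{E}(k) = \frac{(k!)^4}{(2k+1)\,[(2k)!]^3}$ satisfies $\mathcal{E}(k) \le \left(\frac{1}{8k^2}\right)^k$. -/
/-!
Write `E k = (k!)^4 / ((2k+1) ((2k)!)^3)`. Passing from `k` to `k + 1` multiplies `E k` by
`(k+1) / (8 (2k+3) (2k+1)^2)` and the bound `(8k^2)^{-k}` by `k^{2k} / (8 (k+1)^{2k+2})`, so the
claim follows by induction once `(k+1)^{2k+3} ≤ k^{2k} (2k+3) (2k+1)^2`. For `k ≥ 6` this follows from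
`(1 + 1/k)^{2k} ≤ e^2 < 7.39` together with `7.39 (k+1)^3 ≤ (2k+3)(2k+1)^2`; the cases `k ≤ 5` are
checked numerically.
-/

open Real

lemma exp_one_sq_mul_add_one_pow_three_le {x : ℝ} (hx : 6 ≤ x) :
    exp 1 ^ 2 * (x + 1) ^ 3 ≤ (2 * x + 3) * (2 * x + 1) ^ 2 := by
  have he : exp 1 ^ 2 ≤ 7.3890562 := by
    have := exp_one_lt_d9
    nlinarith [exp_pos 1]
  have hx6 : 0 ≤ x - 6 := by linarith
  nlinarith [mul_nonneg (mul_nonneg hx6 hx6) hx6, sq_nonneg (x - 6),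
    pow_nonneg (by linarith : (0 : ℝ) ≤ x + 1) 3]

lemma add_one_pow_two_mul_add_three_le (n : ℕ) :
    ((n : ℝ) + 1) ^ (2 * n + 3) ≤ (n : ℝ) ^ (2 * n) * ((2 * n + 3) * (2 * n + 1) ^ 2) := by
  rcases le_or_gt n 5 with hn | hn
  · interval_cases n <;> norm_num
  have hn6 : (6 : ℝ) ≤ n := by exact_mod_cast hn
  have hn0 : (0 : ℝ) < n := by linarith
  have h_exp : ((n : ℝ) + 1) ^ (2 * n) ≤ exp 1 ^ 2 * (n : ℝ) ^ (2 * n) := by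
    calc ((n : ℝ) + 1) ^ (2 * n) = ((1 + (n : ℝ)⁻¹) ^ n) ^ 2 * (n : ℝ) ^ (2 * n) := by
          rw [← pow_mul, mul_comm n 2, ← mul_pow, add_mul, one_mul,
            inv_mul_cancel₀ hn0.ne', add_comm]
      _ ≤ exp 1 ^ 2 * (n : ℝ) ^ (2 * n) := by gcongr; exact one_add_inv_pow_le_exp
  calc ((n : ℝ) + 1) ^ (2 * n + 3) = ((n : ℝ) + 1) ^ (2 * n) * ((n : ℝ) + 1) ^ 3 := pow_add _ _ _
    _ ≤ exp 1 ^ 2 * (n : ℝ) ^ (2 * n) * ((n : ℝ) + 1) ^ 3 := by gcongr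
    _ = (n : ℝ) ^ (2 * n) * (exp 1 ^ 2 * ((n : ℝ) + 1) ^ 3) := by ring
    _ ≤ (n : ℝ) ^ (2 * n) * ((2 * n + 3) * (2 * n + 1) ^ 2) := by
        gcongr _ * ?_; exact exp_one_sq_mul_add_one_pow_three_le hn6

lemma factorial_pow_four_mul_le (k : ℕ) :
    (k.factorial : ℝ) ^ 4 * (8 * (k : ℝ) ^ 2) ^ k ≤
      (2 * (k : ℝ) + 1) * ((2 * k).factorial : ℝ) ^ 3 := by
  induction k with
  | zero => norm_num
  | succ n ih =>
    have hfac : ((2 * (n + 1)).factorial : ℝ) =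
        (2 * n + 2) * (2 * n + 1) * ((2 * n).factorial : ℝ) := by
      rw [show 2 * (n + 1) = 2 * n + 1 + 1 by ring, Nat.factorial_succ, Nat.factorial_succ]
      push_cast; ring
    set A := (n.factorial : ℝ) ^ 4 * 8 ^ n
    calc ((n + 1).factorial : ℝ) ^ 4 * (8 * ((n + 1 : ℕ) : ℝ) ^ 2) ^ (n + 1)
        = 8 * ((n : ℝ) + 1) ^ (2 * n + 3) * A * ((n : ℝ) + 1) ^ 3 := by
          rw [Nat.factorial_succ, mul_pow, ← pow_mul]; push_cast; ring
      _ ≤ 8 * ((n : ℝ) ^ (2 * n) * ((2 * n + 3) * (2 * n + 1) ^ 2)) * A * ((n : ℝ) + 1) ^ 3 := by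
          gcongr; exact add_one_pow_two_mul_add_three_le n
      _ = 8 * ((2 * n + 3) * (2 * n + 1) ^ 2) * ((n.factorial : ℝ) ^ 4 * (8 * (n : ℝ) ^ 2) ^ n)
            * ((n : ℝ) + 1) ^ 3 := by rw [mul_pow, ← pow_mul]; ring
      _ ≤ 8 * ((2 * n + 3) * (2 * n + 1) ^ 2) * ((2 * (n : ℝ) + 1) * ((2 * n).factorial : ℝ) ^ 3)
            * ((n : ℝ) + 1) ^ 3 := by gcongr
      _ = (2 * ((n + 1 : ℕ) : ℝ) + 1) * ((2 * (n + 1)).factorial : ℝ) ^ 3 := by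
          rw [hfac]; push_cast; ring

theorem stmt8_general (k : ℕ) :
    ((k.factorial : ℝ)) ^ 4 / ((2 * (k : ℝ) + 1) * ((2 * k).factorial : ℝ) ^ 3)
      ≤ (1 / (8 * (k : ℝ) ^ 2)) ^ k := by
  obtain rfl | hk := k.eq_zero_or_pos
  · norm_num
  rw [div_pow, one_pow, div_le_div_iff₀ (by positivity) (by positivity), one_mul]
  exact factorial_pow_four_mul_le k

/-- For every integer `k ≥ 1`,
`(k!)^4 / ((2k+1) * ((2k)!)^3) ≤ (1 / (8 k²))^k`. -/
theorem stmt8 (k : ℕ) (hk : 1 ≤ k) :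
    ((k.factorial : ℝ)) ^ 4 / ((2 * (k : ℝ) + 1) * ((2 * k).factorial : ℝ) ^ 3)
      ≤ (1 / (8 * (k : ℝ) ^ 2)) ^ k :=
  stmt8_general k
end

section
/- Let $A, \hat{A}$ be linear operators (matrices) on a finite-dimensional inner product space with $\|\hat{A} - A\| \le E$, and for $\delta > 0$ define the Tikhonov-regularized pseudoinverses $A_\delta^+ = (A^T A + \delta I)^{-1}A^T$ and $\hat{A}_\delta^+ = (\hat{A}^T \hat{A} + \delta I)^{-1}\hat{A}^T$. Then $\|\hat{A}_\delta^+ - A_\delta^+\| \le \left(\frac{1}{\delta} + \frac{(\|A\| + \|\hat{A}\|)\max\{\|A\|, \|\hat{A}\|\}}{\delta^2}\right) E$. -/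
/-!
Write `G_A = A* A + δ`, so that `A_δ⁺ = G_A⁻¹ A*`. The resolvent identity
`G_Â⁻¹ - G_A⁻¹ = G_Â⁻¹ (G_A - G_Â) G_A⁻¹` gives
`Â_δ⁺ - A_δ⁺ = G_Â⁻¹ (Â - A)* + G_Â⁻¹ (G_A - G_Â) G_A⁻¹ A*`, where
`G_A - G_Â = A* (A - Â) + (A - Â)* Â`. Since `⟪G_A x, x⟫ = ‖A x‖² + δ ‖x‖² ≥ δ ‖x‖²`, the operator
`G_A` is invertible (Lax–Milgram) with `‖G_A⁻¹‖ ≤ 1 / δ`, and the bound follows term by term.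
-/

open ContinuousLinearMap
open scoped Ring

theorem Ring.inverse_mul_sub_inverse_mul {R : Type*} [Ring R] {M N : R} (hM : IsUnit M)
    (hN : IsUnit N) (a b : R) :
    N⁻¹ʳ * b - M⁻¹ʳ * a = N⁻¹ʳ * (b - a) + N⁻¹ʳ * (M - N) * M⁻¹ʳ * a := by
  rw [← Ring.inverse_sub_inverse (iff_of_true hN hM)]
  noncomm_ring

theorem Ring.norm_inverse_mul_sub_inverse_mul_le {R : Type*} [NormedRing R] {M N : R}
    (hM : IsUnit M) (hN : IsUnit N) (a b : R) :
    ‖N⁻¹ʳ * b - M⁻¹ʳ * a‖ ≤ ‖N⁻¹ʳ‖ * ‖b - a‖ + ‖N⁻¹ʳ‖ * ‖M - N‖ * ‖M⁻¹ʳ‖ * ‖a‖ := by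
  rw [Ring.inverse_mul_sub_inverse_mul hM hN]
  refine (norm_add_le _ _).trans (add_le_add (norm_mul_le _ _) ?_)
  refine (norm_mul_le _ _).trans (mul_le_mul_of_nonneg_right ?_ (norm_nonneg _))
  exact (norm_mul_le _ _).trans (mul_le_mul_of_nonneg_right (norm_mul_le _ _) (norm_nonneg _))

variable {V : Type*} [NormedAddCommGroup V] [InnerProductSpace ℝ V] [CompleteSpace V]

noncomputable def tikhonovGram (T : V →L[ℝ] V) (δ : ℝ) : V →L[ℝ] V := adjoint T ∘L T + δ • 1

@[simp]
theorem tikhonovGram_apply (T : V →L[ℝ] V) (δ : ℝ) (x : V) :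
    tikhonovGram T δ x = adjoint T (T x) + δ • x := rfl

theorem inner_tikhonovGram_apply_self (T : V →L[ℝ] V) (δ : ℝ) (x : V) :
    inner ℝ (tikhonovGram T δ x) x = ‖T x‖ ^ 2 + δ * ‖x‖ ^ 2 := by
  rw [tikhonovGram_apply, inner_add_left, adjoint_inner_left, real_inner_smul_left,
    real_inner_self_eq_norm_sq, real_inner_self_eq_norm_sq]

theorem mul_norm_le_norm_tikhonovGram_apply (T : V →L[ℝ] V) (δ : ℝ) (x : V) :
    δ * ‖x‖ ≤ ‖tikhonovGram T δ x‖ := by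
  rcases (norm_nonneg x).eq_or_lt with hx | hx
  · simp [← hx]
  refine le_of_mul_le_mul_right ?_ hx
  calc δ * ‖x‖ * ‖x‖ ≤ ‖T x‖ ^ 2 + δ * ‖x‖ ^ 2 := by nlinarith [sq_nonneg ‖T x‖]
    _ = inner ℝ (tikhonovGram T δ x) x := (inner_tikhonovGram_apply_self T δ x).symm
    _ ≤ ‖tikhonovGram T δ x‖ * ‖x‖ := real_inner_le_norm _ _

theorem isCoercive_tikhonovGram (T : V →L[ℝ] V) {δ : ℝ} (hδ : 0 < δ) :
    IsCoercive ((innerSL ℝ : V →L[ℝ] V →L[ℝ] ℝ) ∘L tikhonovGram T δ) := by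
  refine ⟨δ, hδ, fun x => ?_⟩
  rw [comp_apply, innerSL_apply_apply, inner_tikhonovGram_apply_self]
  nlinarith [sq_nonneg ‖T x‖]

/-- By Lax–Milgram the coercive form `⟪tikhonovGram T δ x, y⟫` is represented by an isomorphism,
which can only be `tikhonovGram T δ` itself. -/
theorem isUnit_tikhonovGram (T : V →L[ℝ] V) {δ : ℝ} (hδ : 0 < δ) :
    IsUnit (tikhonovGram T δ) := by
  set L := (isCoercive_tikhonovGram T hδ).continuousLinearEquivOfBilin
  have hL : (L : V →L[ℝ] V) = tikhonovGram T δ := by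
    ext1 x
    refine ext_inner_right ℝ fun y => ?_
    rw [ContinuousLinearEquiv.coe_coe, IsCoercive.continuousLinearEquivOfBilin_apply, comp_apply,
      innerSL_apply_apply]
  rw [← hL, isUnit_iff_bijective]
  exact L.bijective

theorem norm_inverse_tikhonovGram_le (T : V →L[ℝ] V) {δ : ℝ} (hδ : 0 < δ) :
    ‖(tikhonovGram T δ)⁻¹ʳ‖ ≤ δ⁻¹ := by
  refine opNorm_le_bound _ (inv_nonneg.mpr hδ.le) fun x => ?_
  rw [inv_mul_eq_div, le_div_iff₀' hδ]
  have hx : tikhonovGram T δ ((tikhonovGram T δ)⁻¹ʳ x) = x :=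
    DFunLike.congr_fun (Ring.mul_inverse_cancel _ (isUnit_tikhonovGram T hδ)) x
  simpa only [hx] using mul_norm_le_norm_tikhonovGram_apply T δ ((tikhonovGram T δ)⁻¹ʳ x)

theorem tikhonovGram_sub_tikhonovGram (S T : V →L[ℝ] V) (δ : ℝ) :
    tikhonovGram S δ - tikhonovGram T δ = adjoint S ∘L (S - T) + adjoint (S - T) ∘L T := by
  simp only [tikhonovGram, map_sub, comp_sub, sub_comp]
  abel

theorem norm_tikhonovGram_sub_tikhonovGram_le (S T : V →L[ℝ] V) (δ : ℝ) :
    ‖tikhonovGram S δ - tikhonovGram T δ‖ ≤ (‖S‖ + ‖T‖) * ‖S - T‖ := by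
  rw [tikhonovGram_sub_tikhonovGram]
  calc ‖adjoint S ∘L (S - T) + adjoint (S - T) ∘L T‖
      ≤ ‖adjoint S‖ * ‖S - T‖ + ‖adjoint (S - T)‖ * ‖T‖ :=
        (norm_add_le _ _).trans (add_le_add (opNorm_comp_le _ _) (opNorm_comp_le _ _))
    _ = (‖S‖ + ‖T‖) * ‖S - T‖ := by simp only [LinearIsometryEquiv.norm_map]; ring

/-- Perturbation bound for Tikhonov-regularized pseudoinverses
`A_δ⁺ = (AᵀA + δ I)⁻¹ Aᵀ` on a finite-dimensional inner-product space: if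
`‖Â - A‖ ≤ E` then `‖Â_δ⁺ - A_δ⁺‖ ≤ (1/δ + (‖A‖ + ‖Â‖) max{‖A‖,‖Â‖}/δ²) E`. -/
theorem stmt18 {n : ℕ}
    (A Ahat : EuclideanSpace ℝ (Fin n) →L[ℝ] EuclideanSpace ℝ (Fin n))
    (E δ : ℝ) (hδ : 0 < δ) (hE : ‖Ahat - A‖ ≤ E) :
    ‖(Ring.inverse ((ContinuousLinearMap.adjoint Ahat).comp Ahat + δ • 1)).comp
          (ContinuousLinearMap.adjoint Ahat)
        - (Ring.inverse ((ContinuousLinearMap.adjoint A).comp A + δ • 1)).comp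
          (ContinuousLinearMap.adjoint A)‖
      ≤ (1 / δ + (‖A‖ + ‖Ahat‖) * max ‖A‖ ‖Ahat‖ / δ ^ 2) * E := by
  have hE₀ : 0 ≤ E := (norm_nonneg _).trans hE
  have hGram : ‖tikhonovGram A δ - tikhonovGram Ahat δ‖ ≤ (‖A‖ + ‖Ahat‖) * E := by
    rw [norm_sub_rev] at hE
    exact (norm_tikhonovGram_sub_tikhonovGram_le A Ahat δ).trans (by gcongr)
  rw [← mul_def, ← mul_def]
  refine (Ring.norm_inverse_mul_sub_inverse_mul_le (isUnit_tikhonovGram A hδ)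
    (isUnit_tikhonovGram Ahat hδ) (adjoint A) (adjoint Ahat)).trans ?_
  rw [← map_sub, LinearIsometryEquiv.norm_map, LinearIsometryEquiv.norm_map]
  have hN := norm_inverse_tikhonovGram_le Ahat hδ
  have hM := norm_inverse_tikhonovGram_le A hδ
  have hA : ‖A‖ ≤ max ‖A‖ ‖Ahat‖ := le_max_left _ _
  calc _ ≤ δ⁻¹ * E + δ⁻¹ * ((‖A‖ + ‖Ahat‖) * E) * δ⁻¹ * max ‖A‖ ‖Ahat‖ := by gcongr
    _ = (1 / δ + (‖A‖ + ‖Ahat‖) * max ‖A‖ ‖Ahat‖ / δ ^ 2) * E := by ring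
end
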